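/- arXiv:2209.09860 — 4 statements merged into one kernel-verified Lean document; each statement's English description precedes it below -/
import Mathlib

section
/- Let G be a finite simple graph on vertex set V, let Z ⊆ V, and let M be a matching whose edges have both endpoints in Z (the edges of M need not be edges of G). Suppose H is a Hamilton cycle of the graph G[Z] ∪ M (on vertex set Z) that contains every edge of M, and suppose that for every edge e = xy ∈ M there is a path P_e in G from x to y all of whose internal vertices lie in V ∖ Z, such that the internal vertex sets of the paths {P_e : e ∈ M} are pairwise disjoint and their union equals V ∖ Z. Then G has a Hamilton cycle; indeed, the graph with edge set (E(H) ∖ M) ∪ ⋃_{e ∈ M} E(P_e) is a Hamilton cycle of G on V. -/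
/-!
Replacing an edge `uv` of a cycle by a `u`–`v` path whose internal vertices avoid the cycle
yields a cycle again. Doing this for the edges of `M` one at a time keeps this hypothesis
alive, because the internal vertex sets of the paths are pairwise disjoint; the result is a
cycle of `G` through `Z` and through all internal vertices, i.e. through every vertex.
-/

namespace SimpleGraph.Walk

variable {V : Type*} {G : SimpleGraph V}

def internalVerts {u v : V} (p : G.Walk u v) : Set V := {w | w ∈ p.support ∧ w ≠ u ∧ w ≠ v}

@[simp]
lemma internalVerts_mapLe {G' : SimpleGraph V} (h : G ≤ G') {u v : V} (p : G.Walk u v) :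
    (p.mapLe h).internalVerts = p.internalVerts := by
  simp [internalVerts]

lemma eq_mk_of_mem_edges_of_mem_edges {u v a b : V} {e : Sym2 V} {p : G.Walk u v}
    {c : G.Walk a b} (hp : ∀ w ∈ p.internalVerts, w ∉ c.support)
    (hpe : e ∈ p.edges) (hce : e ∈ c.edges) : e = s(u, v) := by
  induction e using Sym2.ind with
  | _ w₁ w₂ =>
  have hend : ∀ w ∈ p.support, w ∈ c.support → w = u ∨ w = v := fun w hw hwc => by
    by_contra! h
    exact hp w ⟨hw, h⟩ hwc
  have hne := (p.adj_of_mem_edges hpe).ne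
  rcases hend _ (p.fst_mem_support_of_mem_edges hpe) (c.fst_mem_support_of_mem_edges hce)
    with rfl | rfl <;>
  rcases hend _ (p.snd_mem_support_of_mem_edges hpe) (c.snd_mem_support_of_mem_edges hce)
    with rfl | rfl <;> simp_all [Sym2.eq_swap]

lemma IsCycle.exists_cons_eq_or_cons_eq_reverse {u v : V} {c : G.Walk u u} (hc : c.IsCycle)
    (he : s(u, v) ∈ c.edges) :
    ∃ (h : G.Adj u v) (q : G.Walk v u), cons h q = c ∨ cons h q = c.reverse := by
  cases c with
  | nil => simp at he
  | cons h r =>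
  rcases List.mem_cons.mp (edges_cons h r ▸ he) with hfirst | hlater
  · obtain rfl := Sym2.congr_right.mp hfirst
    exact ⟨h, r, Or.inl rfl⟩
  · have hr : r.reverse.IsPath := ((cons_isCycle_iff r h).mp hc).1.reverse
    have hlater' : s(u, v) ∈ r.reverse.edges := by simpa using hlater
    have hnil : ¬ r.reverse.Nil := edges_eq_nil.not.mp (List.ne_nil_of_mem hlater')
    obtain rfl := hr.eq_snd_of_mem_edges hlater'
    refine ⟨r.reverse.adj_snd hnil, r.reverse.tail.concat h.symm, Or.inr ?_⟩
    rw [reverse_cons, ← concat_eq_append, ← concat_cons, cons_tail_eq _ hnil]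

lemma IsPath.start_notMem_support_tail {u v : V} {p : G.Walk u v} (hp : p.IsPath) :
    u ∉ p.support.tail :=
  (List.nodup_cons.mp (p.cons_tail_support ▸ hp.support_nodup)).1

lemma IsCycle.exists_isPath_of_mem_edges [DecidableEq V] {a u v : V} {c : G.Walk a a}
    (hc : c.IsCycle) (he : s(u, v) ∈ c.edges) :
    ∃ q : G.Walk v u, q.IsPath ∧ 1 < q.length ∧ (∀ w, w ∈ q.support ↔ w ∈ c.support) ∧
      ∀ e, e ∈ q.edges ↔ e ∈ c.edges ∧ e ≠ s(u, v) := by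
  have hu := c.fst_mem_support_of_mem_edges he
  obtain ⟨h, q, hq⟩ := (hc.rotate hu).exists_cons_eq_or_cons_eq_reverse
    ((c.rotate_edges u hu).mem_iff.mpr he)
  have hcyc : (cons h q).IsCycle := by
    rcases hq with hq | hq <;> simp [hq, hc.rotate hu]
  have hsupp : ∀ w, w ∈ (cons h q).support ↔ w ∈ c.support := by
    rcases hq with hq | hq <;> simp [hq, mem_support_rotate_iff]
  have hedges : (cons h q).edges.Perm c.edges := by
    rcases hq with hq | hq
    · exact hq ▸ (c.rotate_edges u hu).perm
    · exact hq ▸ (edges_reverse _ ▸ List.reverse_perm _).trans (c.rotate_edges u hu).perm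
  obtain ⟨hqpath, huv⟩ := (cons_isCycle_iff q h).mp hcyc
  refine ⟨q, hqpath, ?_, fun w => ?_, fun e => ?_⟩
  · have := hcyc.three_le_length
    rw [length_cons] at this
    omega
  · rw [← hsupp, support_cons, List.mem_cons, or_iff_right_of_imp (· ▸ q.end_mem_support)]
  · rw [← hedges.mem_iff, edges_cons, List.mem_cons]
    grind

lemma IsCycle.exists_isCycle_replace_edge [DecidableEq V] {a u v : V} {c : G.Walk a a}
    (hc : c.IsCycle) (he : s(u, v) ∈ c.edges) {p : G.Walk u v} (hp : p.IsPath)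
    (hpc : ∀ w ∈ p.internalVerts, w ∉ c.support) :
    ∃ c' : G.Walk v v, c'.IsCycle ∧ (∀ w, w ∈ c'.support ↔ w ∈ c.support ∨ w ∈ p.support) ∧
      ∀ e, e ∈ c'.edges ↔ (e ∈ c.edges ∧ e ≠ s(u, v)) ∨ e ∈ p.edges := by
  obtain ⟨q, hq, hqlen, hqsupp, hqedges⟩ := hc.exists_isPath_of_mem_edges he
  refine ⟨q.append p, hq.isCycle_append hp ?_ (Or.inl hqlen), fun w => ?_, fun e => ?_⟩
  · intro w hwq hwp
    have hwu : w ≠ u := fun hw => hp.start_notMem_support_tail (hw ▸ hwp)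
    have hwv : w ≠ v := fun hw => hq.start_notMem_support_tail (hw ▸ hwq)
    exact hpc w ⟨List.mem_of_mem_tail hwp, hwu, hwv⟩ ((hqsupp w).mp (List.mem_of_mem_tail hwq))
  · rw [mem_support_append_iff, hqsupp]
  · rw [edges_append, List.mem_append, hqedges]

theorem IsCycle.exists_isCycle_replace_edges [DecidableEq V] {a : V} {c : G.Walk a a}
    (hc : c.IsCycle) (M : Finset (Sym2 V)) (hM : ∀ e ∈ M, e ∈ c.edges) (x y : Sym2 V → V)
    (P : ∀ e : Sym2 V, G.Walk (x e) (y e)) (hxy : ∀ e ∈ M, e = s(x e, y e))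
    (hP : ∀ e ∈ M, (P e).IsPath) (hPc : ∀ e ∈ M, ∀ v ∈ (P e).internalVerts, v ∉ c.support)
    (hPdisj : (M : Set (Sym2 V)).PairwiseDisjoint fun e => (P e).internalVerts) :
    ∃ (b : V) (c' : G.Walk b b), c'.IsCycle ∧
      (∀ v, v ∈ c'.support ↔ v ∈ c.support ∨ ∃ e ∈ M, v ∈ (P e).support) ∧
      ∀ e, e ∈ c'.edges ↔ (e ∈ c.edges ∧ e ∉ M) ∨ ∃ f ∈ M, e ∈ (P f).edges := by
  induction M using Finset.induction_on with
  | empty => exact ⟨a, c, hc, by simp, by simp⟩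
  | insert e₀ M he₀ ih =>
  rw [Finset.forall_mem_insert] at hM hxy hP hPc
  rw [Finset.coe_insert, Set.pairwiseDisjoint_insert] at hPdisj
  obtain ⟨b, c₁, hc₁, hc₁supp, hc₁edges⟩ := ih hM.2 hxy.2 hP.2 hPc.2 hPdisj.1
  have hendpoints : ∀ f ∈ M, x f ∈ c.support ∧ y f ∈ c.support := fun f hf =>
    have hf : s(x f, y f) ∈ c.edges := hxy.2 f hf ▸ hM.2 f hf
    ⟨c.fst_mem_support_of_mem_edges hf, c.snd_mem_support_of_mem_edges hf⟩
  have he₀c₁ : s(x e₀, y e₀) ∈ c₁.edges := by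
    rw [hc₁edges, ← hxy.1]
    exact Or.inl ⟨hM.1, he₀⟩
  have hP₀c₁ : ∀ w ∈ (P e₀).internalVerts, w ∉ c₁.support := by
    intro w hw hwc₁
    rcases (hc₁supp w).mp hwc₁ with hwc | ⟨f, hf, hwf⟩
    · exact hPc.1 w hw hwc
    · have hwf' : w ∈ (P f).internalVerts :=
        ⟨hwf, fun h => hPc.1 w hw (h ▸ (hendpoints f hf).1),
          fun h => hPc.1 w hw (h ▸ (hendpoints f hf).2)⟩
      exact Set.disjoint_left.mp (hPdisj.2 f hf (fun h => he₀ (h ▸ hf))) hw hwf'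
  obtain ⟨c', hc', hc'supp, hc'edges⟩ := hc₁.exists_isCycle_replace_edge he₀c₁ hP.1 hP₀c₁
  refine ⟨_, c', hc', fun w => ?_, fun e => ?_⟩
  · rw [hc'supp, hc₁supp]
    simp only [Finset.mem_insert, exists_eq_or_imp]
    grind
  · -- the endpoints of `e₀` lie on `c`, so `e₀` can only be an edge of `P f` if `e₀ = f`
    have hM₀ : ∀ f ∈ M, e₀ ∉ (P f).edges := fun f hf he₀f =>
      he₀ (eq_mk_of_mem_edges_of_mem_edges (hPc.2 f hf) he₀f hM.1 ▸ hxy.2 f hf ▸ hf)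
    rw [hc'edges, hc₁edges, ← hxy.1]
    simp only [Finset.mem_insert, exists_eq_or_imp]
    grind

lemma IsCycle.isHamiltonianCycle_of_forall_mem_support [DecidableEq V] {a : V}
    {c : G.Walk a a} (hc : c.IsCycle) (hcV : ∀ w, w ∈ c.support) : c.IsHamiltonianCycle where
  toIsCycle := hc
  isHamiltonian_tail := hc.isPath_tail.isHamiltonian_of_mem fun w => by
    rw [support_tail_of_not_nil c hc.not_nil]
    rcases c.mem_support_iff.mp (hcV w) with rfl | hw
    · exact end_mem_tail_support hc.not_nil
    · exact hw

end SimpleGraph.Walk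

open SimpleGraph Walk

theorem absorb_paths_into_hamilton_cycle_general {V : Type*} [DecidableEq V]
    (G : SimpleGraph V) (Z : Set V) (M : Finset (Sym2 V))
    (a : V) (H : (G ⊔ SimpleGraph.fromEdgeSet ↑M).Walk a a)
    (hH : H.IsCycle) (hHsupp : ∀ x : V, x ∈ H.support ↔ x ∈ Z)
    (hHM : ∀ e ∈ M, e ∈ H.edges)
    (x y : Sym2 V → V) (P : ∀ e : Sym2 V, G.Walk (x e) (y e))
    (hxy : ∀ e ∈ M, e = s(x e, y e))
    (hPpath : ∀ e ∈ M, (P e).IsPath)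
    (hPint : ∀ e ∈ M, ∀ v ∈ (P e).support, v ≠ x e → v ≠ y e → v ∉ Z)
    (hPdisj : ∀ e ∈ M, ∀ f ∈ M, e ≠ f → ∀ v : V,
      (v ∈ (P e).support ∧ v ≠ x e ∧ v ≠ y e) →
      ¬ (v ∈ (P f).support ∧ v ≠ x f ∧ v ≠ y f))
    (hPcover : ∀ v : V, v ∉ Z → ∃ e ∈ M, v ∈ (P e).support ∧ v ≠ x e ∧ v ≠ y e) :
    ∃ (b : V) (C : G.Walk b b), C.IsHamiltonianCycle ∧
      (∀ e : Sym2 V, e ∈ C.edges ↔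
        ((e ∈ H.edges ∧ e ∉ M) ∨ ∃ f ∈ M, e ∈ (P f).edges)) := by
  have hGK : G ≤ G ⊔ fromEdgeSet ↑M := le_sup_left
  have hPH : ∀ e ∈ M, ∀ v ∈ (P e).internalVerts, v ∉ H.support := fun e he v hv hvH =>
    hPint e he v hv.1 hv.2.1 hv.2.2 ((hHsupp v).mp hvH)
  have hPdisj' : (M : Set (Sym2 V)).PairwiseDisjoint fun e => (P e).internalVerts :=
    fun e he f hf hef => Set.disjoint_left.mpr (hPdisj e he f hf hef)
  obtain ⟨b, C, hC, hCsupp, hCedges⟩ := hH.exists_isCycle_replace_edges M hHM x y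
    (fun e => (P e).mapLe hGK) hxy (fun e he => (isPath_mapLe hGK).mpr (hPpath e he))
    (by simpa only [internalVerts_mapLe] using hPH)
    (by simpa only [internalVerts_mapLe] using hPdisj')
  simp only [support_mapLe_eq_support, edges_mapLe_eq_edges] at hCsupp hCedges
  have hCG : ∀ e ∈ C.edges, e ∈ G.edgeSet := by
    intro e he
    rcases (hCedges e).mp he with ⟨heH, heM⟩ | ⟨f, -, hef⟩
    · simpa [heM] using H.edges_subset_edgeSet heH
    · exact (P f).edges_subset_edgeSet hef
  refine ⟨b, C.transfer G hCG, (hC.transfer hCG).isHamiltonianCycle_of_forall_mem_support ?_,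
    by simpa using hCedges⟩
  intro w
  rw [support_transfer, hCsupp, hHsupp]
  by_cases hw : w ∈ Z
  · exact Or.inl hw
  · obtain ⟨e, he, hwe, -⟩ := hPcover w hw
    exact Or.inr ⟨e, he, hwe⟩

/-- Let `G` be a finite simple graph on `V`, let `Z ⊆ V`, and let
`M` be a matching whose edges have both endpoints in `Z` (the edges of `M` need not be
edges of `G`).  Suppose `H` is a Hamilton cycle of `G[Z] ∪ M` (a cycle of `G ⊔ M`
whose support is exactly `Z`) containing every edge of `M`, and suppose that for every
edge `e = xy ∈ M` there is a path `P e` in `G` from `x e` to `y e` whose internal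
vertices lie in `V \ Z`, the internal vertex sets being pairwise disjoint with union
`V \ Z`.  Then `G` has a Hamilton cycle; indeed one whose edge set is
`(E(H) \ M) ∪ ⋃_{e ∈ M} E(P e)`. -/
theorem absorb_paths_into_hamilton_cycle {V : Type*} [Fintype V] [DecidableEq V]
    (G : SimpleGraph V) (Z : Set V) (M : Finset (Sym2 V))
    (hMdiag : ∀ e ∈ M, ¬ e.IsDiag)
    (hMZ : ∀ e ∈ M, ∀ v : V, v ∈ e → v ∈ Z)
    (hMdisj : ∀ e ∈ M, ∀ f ∈ M, e ≠ f → ∀ v : V, v ∈ e → v ∉ f)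
    (a : V) (H : (G ⊔ SimpleGraph.fromEdgeSet ↑M).Walk a a)
    (hH : H.IsCycle) (hHsupp : ∀ x : V, x ∈ H.support ↔ x ∈ Z)
    (hHM : ∀ e ∈ M, e ∈ H.edges)
    (x y : Sym2 V → V) (P : ∀ e : Sym2 V, G.Walk (x e) (y e))
    (hxy : ∀ e ∈ M, e = s(x e, y e))
    (hPpath : ∀ e ∈ M, (P e).IsPath)
    (hPint : ∀ e ∈ M, ∀ v ∈ (P e).support, v ≠ x e → v ≠ y e → v ∉ Z)
    (hPdisj : ∀ e ∈ M, ∀ f ∈ M, e ≠ f → ∀ v : V,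
      (v ∈ (P e).support ∧ v ≠ x e ∧ v ≠ y e) →
      ¬ (v ∈ (P f).support ∧ v ≠ x f ∧ v ≠ y f))
    (hPcover : ∀ v : V, v ∉ Z → ∃ e ∈ M, v ∈ (P e).support ∧ v ≠ x e ∧ v ≠ y e) :
    ∃ (b : V) (C : G.Walk b b), C.IsHamiltonianCycle ∧
      (∀ e : Sym2 V, e ∈ C.edges ↔
        ((e ∈ H.edges ∧ e ∉ M) ∨ ∃ f ∈ M, e ∈ (P f).edges)) :=
  absorb_paths_into_hamilton_cycle_general G Z M a H hH hHsupp hHM x y P hxy hPpath hPint hPdisj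
    hPcover
end

section
/- Let K : ℕ → ℕ satisfy 1 ≤ K(n) and K(n) = O(log n). Set n′ = ⌊n/log log n⌋, t_ε = ⌊50·(1 + (log n)/(2K(n)))·n/log log n⌋, and q_n = 1 − (1 − (C(n′,2) − 10n′)/C(n,2))^{K(n)}. Then Pr(Bin(t_ε, q_n) < 10 n′) → 0 as n → ∞. -/
open Filter Real

/-! With `p = (C(n′,2) − 10 n′) / C(n,2) ≥ 1 / (8 (log log n)²)` we have `q ≥ K p / (1 + K p)`,
and `p log n ≥ 2` eventually because `(log log n)² = o(log n)`; this makes `q t_ε ≥ 50 n′ − 1`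
for every `K ≥ 1`, the term `log n / (2K)` compensating for small `K`. A Chernoff bound then gives
`Pr(Bin(t_ε, q) < 10 n′) ≤ 2 ^ (10 n′) e^(−q t_ε / 2) ≤ e^(−10 n′)`, and `n′ → ∞`. -/

noncomputable def binomLT (N : ℕ) (q a : ℝ) : ℝ :=
  ∑ k ∈ Finset.range (N + 1),
    if (k : ℝ) < a then (N.choose k : ℝ) * q ^ k * (1 - q) ^ (N - k) else 0

section Binomial

variable {N : ℕ} {q a : ℝ}

theorem binomLT_nonneg (hq0 : 0 ≤ q) (hq1 : q ≤ 1) : 0 ≤ binomLT N q a :=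
  Finset.sum_nonneg fun k _ => by
    have : 0 ≤ 1 - q := sub_nonneg.2 hq1
    split_ifs <;> positivity

-- Chernoff's tilt by 2: for `k < a` the term is at most `2 ^ a` times the `q / 2`-tilted term.
theorem binomLT_le_two_rpow_mul (hq0 : 0 ≤ q) (hq1 : q ≤ 1) :
    binomLT N q a ≤ 2 ^ a * (1 - q / 2) ^ N := by
  have h1q : 0 ≤ 1 - q := sub_nonneg.2 hq1
  calc binomLT N q a
      ≤ ∑ k ∈ Finset.range (N + 1), 2 ^ a * ((q / 2) ^ k * (1 - q) ^ (N - k) * N.choose k) := by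
        refine Finset.sum_le_sum fun k _ => ?_
        split_ifs with hk
        · have h2k : (2 : ℝ) ^ k ≤ 2 ^ a := by
            rw [← rpow_natCast]
            exact rpow_le_rpow_of_exponent_le one_le_two hk.le
          calc (N.choose k : ℝ) * q ^ k * (1 - q) ^ (N - k)
              = 2 ^ k * ((q / 2) ^ k * (1 - q) ^ (N - k) * N.choose k) := by
                rw [div_pow]; field_simp
            _ ≤ _ := by gcongr
        · positivity
    _ = 2 ^ a * (1 - q / 2) ^ N := by
        rw [← Finset.mul_sum, ← add_pow]; ring_nf

theorem binomLT_le_exp_neg (hq0 : 0 ≤ q) (hq1 : q ≤ 1) (ha : 0 ≤ a) (hN : 4 * a ≤ q * N) :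
    binomLT N q a ≤ exp (-a) := by
  have hpow : (1 - q / 2) ^ N ≤ exp (-(q * N / 2)) := by
    calc (1 - q / 2) ^ N ≤ exp (-(q / 2)) ^ N := by
          gcongr
          · linarith
          · linarith [add_one_le_exp (-(q / 2))]
      _ = exp (-(q * N / 2)) := by rw [← exp_nat_mul]; ring_nf
  have hlog2 : log 2 ≤ 1 := by linarith [log_le_sub_one_of_pos (zero_lt_two (α := ℝ))]
  calc binomLT N q a ≤ 2 ^ a * (1 - q / 2) ^ N := binomLT_le_two_rpow_mul hq0 hq1
    _ ≤ exp (log 2 * a) * exp (-(q * N / 2)) := by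
        rw [← rpow_def_of_pos two_pos]; gcongr
    _ ≤ exp (-a) := by
        rw [← exp_add]; gcongr; nlinarith

end Binomial

theorem div_one_add_mul_le_one_sub_one_sub_pow {p : ℝ} (hp0 : 0 ≤ p) (hp1 : p ≤ 1) (K : ℕ) :
    K * p / (1 + K * p) ≤ 1 - (1 - p) ^ K := by
  have hKp : 0 < 1 + K * p := by positivity
  have hpow : (1 - p) ^ K ≤ 1 / (1 + K * p) :=
    calc (1 - p) ^ K ≤ exp (-p) ^ K := by
          gcongr; linarith [add_one_le_exp (-p)]
      _ = (exp (K * p))⁻¹ := by rw [← exp_nat_mul, ← exp_neg]; ring_nf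
      _ ≤ 1 / (1 + K * p) := by
          rw [one_div]; gcongr; linarith [add_one_le_exp (K * p)]
  have : K * p / (1 + K * p) = 1 - 1 / (1 + K * p) := by field_simp; ring
  linarith

theorem one_sub_one_sub_pow_mem_Icc {p : ℝ} (hp0 : 0 ≤ p) (hp1 : p ≤ 1) (K : ℕ) :
    1 - (1 - p) ^ K ∈ Set.Icc 0 1 :=
  ⟨sub_nonneg.2 (pow_le_one₀ (by linarith) (by linarith)),
    sub_le_self _ (pow_nonneg (by linarith) _)⟩

-- With `q ≥ K p / (1 + K p)` the product is at least `(50 K p + 25 L p) / (1 + K p)`, whatever `K` is.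
theorem fifty_le_one_sub_one_sub_pow_mul {p L : ℝ} {K : ℕ} (hp0 : 0 ≤ p) (hp1 : p ≤ 1)
    (hK : 0 < K) (hLp : 2 ≤ L * p) :
    50 ≤ (1 - (1 - p) ^ K) * (50 * (1 + L / (2 * K))) := by
  have hK' : (0 : ℝ) < K := by exact_mod_cast hK
  have hKp : 0 < 1 + K * p := by positivity
  have hA : 0 ≤ 50 * (1 + L / (2 * K)) := by
    have : 0 ≤ L := by nlinarith
    positivity
  calc (50 : ℝ) ≤ K * p / (1 + K * p) * (50 * (1 + L / (2 * K))) := by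
        rw [div_mul_eq_mul_div, le_div_iff₀ hKp]
        field_simp
        nlinarith
    _ ≤ _ := by gcongr; exact div_one_add_mul_le_one_sub_one_sub_pow hp0 hp1 K

noncomputable def pairRatio (k n : ℕ) : ℝ := ((k.choose 2 : ℝ) - 10 * k) / (n.choose 2 : ℝ)

theorem pairRatio_nonneg {k : ℕ} (n : ℕ) (hk : 21 ≤ k) : 0 ≤ pairRatio k n := by
  have hk' : (21 : ℝ) ≤ k := by exact_mod_cast hk
  refine div_nonneg ?_ (Nat.cast_nonneg _)
  rw [Nat.cast_choose_two]
  nlinarith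

theorem pairRatio_le_one {k n : ℕ} (hkn : k ≤ n) : pairRatio k n ≤ 1 := by
  refine div_le_one_of_le₀ ?_ (Nat.cast_nonneg _)
  have : (k.choose 2 : ℝ) ≤ n.choose 2 := by exact_mod_cast Nat.choose_le_choose 2 hkn
  linarith [(Nat.cast_nonneg k : (0 : ℝ) ≤ k)]

theorem one_div_le_pairRatio {k n : ℕ} {ℓ : ℝ} (hk : 42 ≤ k) (hkn : k ≤ n) (hℓ : 0 < ℓ)
    (hnk : n / ℓ < k + 1) : 1 / (8 * ℓ ^ 2) ≤ pairRatio k n := by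
  have hk' : (42 : ℝ) ≤ k := by exact_mod_cast hk
  have hn2 : (0 : ℝ) < n.choose 2 := by
    exact_mod_cast Nat.choose_pos (by omega)
  have hn : (n : ℝ) ≤ 2 * k * ℓ := by
    rw [div_lt_iff₀ hℓ] at hnk; nlinarith
  rw [pairRatio, div_le_div_iff₀ (by positivity) hn2, Nat.cast_choose_two, Nat.cast_choose_two]
  have : (0 : ℝ) ≤ n := Nat.cast_nonneg n
  nlinarith [mul_self_le_mul_self this hn]

theorem binomLT_pairRatio_mem_Icc {K k n t : ℕ} {L ℓ : ℝ} (hK : 0 < K) (hℓ : 1 ≤ ℓ)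
    (hL : 16 * ℓ ^ 2 ≤ L) (hk : 42 ≤ k) (hk_le : (k : ℝ) ≤ n / ℓ) (hk_lt : n / ℓ < k + 1)
    (ht : 50 * (1 + L / (2 * K)) * n / ℓ < t + 1) :
    binomLT t (1 - (1 - pairRatio k n) ^ K) (10 * k) ∈ Set.Icc 0 (exp (-(10 * k))) := by
  have hℓ0 : 0 < ℓ := by linarith
  have hkn : k ≤ n := by
    have : (n : ℝ) / ℓ ≤ n := div_le_self (Nat.cast_nonneg n) hℓ
    exact_mod_cast hk_le.trans this
  set p := pairRatio k n
  have hp0 : 0 ≤ p := pairRatio_nonneg n (by omega)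
  have hp1 : p ≤ 1 := pairRatio_le_one hkn
  have hLp : 2 ≤ L * p := by
    have h8 := one_div_le_pairRatio hk hkn hℓ0 hk_lt
    rw [div_le_iff₀ (by positivity)] at h8
    nlinarith
  obtain ⟨hq0, hq1⟩ := one_sub_one_sub_pow_mem_Icc hp0 hp1 K
  have hq50 := fifty_le_one_sub_one_sub_pow_mul hp0 hp1 hK hLp
  set q := 1 - (1 - p) ^ K
  set A := 50 * (1 + L / (2 * K))
  have hk' : (42 : ℝ) ≤ k := by exact_mod_cast hk
  have hmean : 4 * (10 * (k : ℝ)) ≤ q * t :=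
    calc 4 * (10 * (k : ℝ)) ≤ q * A * (n / ℓ) - 1 := by nlinarith
      _ ≤ q * (A * n / ℓ - 1) := by rw [mul_div_assoc]; nlinarith
      _ ≤ q * t := by gcongr; linarith
  exact ⟨binomLT_nonneg hq0 hq1, binomLT_le_exp_neg hq0 hq1 (by positivity) hmean⟩

theorem eventually_sixteen_mul_log_sq_le : ∀ᶠ y : ℝ in atTop, 16 * log y ^ 2 ≤ y := by
  filter_upwards [(isLittleO_pow_log_id_atTop (n := 2)).def (c := 1 / 16) (by norm_num),
    eventually_ge_atTop 0] with y hy hy0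
  rw [norm_pow, norm_eq_abs, sq_abs, id, norm_of_nonneg hy0] at hy
  linarith

theorem tendsto_div_log_log_atTop : Tendsto (fun x : ℝ => x / log (log x)) atTop atTop := by
  have ho : (fun x => log (log x)) =o[atTop] id :=
    (isLittleO_log_id_atTop.comp_tendsto tendsto_log_atTop).trans isLittleO_log_id_atTop
  have hpos : ∀ᶠ x : ℝ in atTop, 0 < log (log x) / x := by
    filter_upwards [(tendsto_log_atTop.comp tendsto_log_atTop).eventually_gt_atTop 0,
      eventually_gt_atTop 0] with x h1 h2
    exact div_pos h1 h2
  refine (Tendsto.inv_tendsto_nhdsGT_zero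
    (tendsto_nhdsWithin_iff.2 ⟨ho.tendsto_div_nhds_zero, hpos⟩)).congr fun x => ?_
  simp only [Pi.inv_apply, inv_div, id]

theorem phase_one_succeeds_general
    (K : ℕ → ℕ) (hK1 : ∀ n, 1 ≤ K n) :
    Tendsto
      (fun n : ℕ =>
        let n' : ℕ := ⌊(n : ℝ) / Real.log (Real.log n)⌋₊
        let tε : ℕ :=
          ⌊50 * (1 + Real.log n / (2 * K n)) * n / Real.log (Real.log n)⌋₊
        let q : ℝ :=
          1 - (1 - ((n'.choose 2 : ℝ) - 10 * n') / (n.choose 2 : ℝ)) ^ (K n)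
        binomLT tε q (10 * (n' : ℝ)))
      atTop (nhds 0) := by
  have hlog : Tendsto (fun n : ℕ => log n) atTop atTop :=
    tendsto_log_atTop.comp tendsto_natCast_atTop_atTop
  have hn' : Tendsto (fun n : ℕ => ⌊(n : ℝ) / log (log n)⌋₊) atTop atTop :=
    tendsto_nat_floor_atTop.comp (tendsto_div_log_log_atTop.comp tendsto_natCast_atTop_atTop)
  have hbound : ∀ᶠ n : ℕ in atTop,
      binomLT ⌊50 * (1 + log n / (2 * K n)) * n / log (log n)⌋₊
          (1 - (1 - pairRatio ⌊(n : ℝ) / log (log n)⌋₊ n) ^ K n)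
          (10 * ⌊(n : ℝ) / log (log n)⌋₊) ∈ Set.Icc 0 (exp (-(10 * ⌊(n : ℝ) / log (log n)⌋₊))) := by
    filter_upwards [(tendsto_log_atTop.comp hlog).eventually_ge_atTop 1,
      hlog.eventually eventually_sixteen_mul_log_sq_le, hn'.eventually_ge_atTop 42]
      with n hℓ hL hk
    exact binomLT_pairRatio_mem_Icc (hK1 n) hℓ hL hk
      (Nat.floor_le (by positivity)) (Nat.lt_floor_add_one _) (Nat.lt_floor_add_one _)
  refine squeeze_zero' (hbound.mono fun n h => h.1) (hbound.mono fun n h => h.2) ?_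
  exact tendsto_exp_neg_atTop_nhds_zero.comp
    ((tendsto_natCast_atTop_atTop.comp hn').const_mul_atTop (by norm_num))

/-- Let `1 ≤ K n = O(log n)`, `n′ = ⌊n/log log n⌋`,
`t_ε = ⌊50·(1 + log n/(2 K n))·n/log log n⌋` and
`q_n = 1 − (1 − (C(n′,2) − 10n′)/C(n,2))^{K n}`.  Then
`Pr(Bin(t_ε, q_n) < 10 n′) → 0` as `n → ∞`. -/
theorem phase_one_succeeds
    (K : ℕ → ℕ) (hK1 : ∀ n, 1 ≤ K n)
    (hKO : ∃ C : ℝ, ∀ᶠ n : ℕ in atTop, (K n : ℝ) ≤ C * Real.log n) :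
    Tendsto
      (fun n : ℕ =>
        let n' : ℕ := ⌊(n : ℝ) / Real.log (Real.log n)⌋₊
        let tε : ℕ :=
          ⌊50 * (1 + Real.log n / (2 * K n)) * n / Real.log (Real.log n)⌋₊
        let q : ℝ :=
          1 - (1 - ((n'.choose 2 : ℝ) - 10 * n') / (n.choose 2 : ℝ)) ^ (K n)
        binomLT tε q (10 * (n' : ℝ)))
      atTop (nhds 0) :=
  phase_one_succeeds_general K hK1
end

section
/- Let K : ℕ → ℕ satisfy 1 ≤ K(n) and K(n) = O(log n). Set t_ε = ⌊50·(1 + (log n)/(2K(n)))·n/log log n⌋, p_n = (1 − 30/log log n)·2K(n)/n and r_n = ⌊t_ε + n·(log n)/(2K(n))⌋. Then n·Pr( Bin(r_n, p_n) ≤ (log n)^{0.8} ) → 0 as n → ∞. -/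
/-!
Write `L = log n`, `ℓ = log L` and `a = L ^ 0.8`. For `M ≥ max (N q) 1`, each of the at most
`a + 1` terms of the lower tail of `Bin(N, q)` below `a` is at most `M ^ a e^{q a - N q}`, so the
tail is at most `exp (a (2 + log M) - N q)`. For `N = r_n`, `q = p_n` the mean satisfies
`L + 10 L / ℓ - 2 ≤ N q ≤ (C + 2) L`: the slack `t_ε` in `r_n` contributes at least `40 L / ℓ`,
which outweighs the loss `30 L / ℓ` in `p_n`. Hence
`n · Pr ≤ exp (a (2 + log (C + 2) + ℓ) - 10 L / ℓ + 2)`, and since `ℓ ≤ L ^ 0.1` eventually, the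
exponent is at most `-8 L ^ 0.9 + 2 → -∞`.
-/
open Filter

/-- `Pr(Bin(N,q) ≤ a)`: the lower tail of a binomial random variable with `N` trials
and success probability `q`, up to the real threshold `a`. -/
noncomputable def binomLE (N : ℕ) (q a : ℝ) : ℝ :=
  ∑ k ∈ Finset.range (N + 1),
    if (k : ℝ) ≤ a then (N.choose k : ℝ) * q ^ k * (1 - q) ^ (N - k) else 0

open Real

lemma binomLE_nonneg (N : ℕ) {q : ℝ} (a : ℝ) (hq0 : 0 ≤ q) (hq1 : q ≤ 1) :
    0 ≤ binomLE N q a := by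
  have := sub_nonneg.2 hq1
  refine Finset.sum_nonneg fun _ _ => ?_
  split_ifs <;> positivity

lemma card_filter_natCast_le (N : ℕ) {a : ℝ} (ha : 0 ≤ a) :
    (((Finset.range (N + 1)).filter fun k : ℕ => (k : ℝ) ≤ a).card : ℝ) ≤ a + 1 := by
  have hsub : (Finset.range (N + 1)).filter (fun k : ℕ => (k : ℝ) ≤ a) ⊆
      Finset.range (⌊a⌋₊ + 1) := fun k hk =>
    Finset.mem_range.2 (Nat.lt_succ_of_le (Nat.le_floor (Finset.mem_filter.1 hk).2))
  calc _ ≤ ((Finset.range (⌊a⌋₊ + 1)).card : ℝ) := by exact_mod_cast Finset.card_le_card hsub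
    _ = ⌊a⌋₊ + 1 := by push_cast [Finset.card_range]; ring
    _ ≤ a + 1 := by linarith [Nat.floor_le ha]

lemma choose_mul_pow_mul_one_sub_pow_le {N k : ℕ} {q a M : ℝ} (hq0 : 0 ≤ q) (hq1 : q ≤ 1)
    (hkN : k ≤ N) (hka : (k : ℝ) ≤ a) (hM : 1 ≤ M) (hNM : N * q ≤ M) :
    (N.choose k : ℝ) * q ^ k * (1 - q) ^ (N - k) ≤ M ^ a * exp (q * a - N * q) := by
  have hchoose : (N.choose k : ℝ) * q ^ k ≤ M ^ a :=
    calc (N.choose k : ℝ) * q ^ k ≤ (N : ℝ) ^ k * q ^ k := by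
          gcongr; exact_mod_cast Nat.choose_le_pow N k
      _ = (N * q) ^ k := (mul_pow _ _ _).symm
      _ ≤ M ^ k := by gcongr
      _ = M ^ (k : ℝ) := (rpow_natCast M k).symm
      _ ≤ M ^ a := rpow_le_rpow_of_exponent_le hM hka
  have htail : (1 - q) ^ (N - k) ≤ exp (q * a - N * q) :=
    calc (1 - q) ^ (N - k) ≤ exp (-q) ^ (N - k) :=
          pow_le_pow_left₀ (by linarith) (one_sub_le_exp_neg q) _
      _ = exp (-(q * (N - k : ℕ))) := by rw [← exp_nat_mul]; ring_nf
      _ ≤ exp (q * a - N * q) := by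
          rw [exp_le_exp, Nat.cast_sub hkN]
          nlinarith
  exact mul_le_mul hchoose htail (pow_nonneg (by linarith) _) (by positivity)

lemma binomLE_le_mul_exp (N : ℕ) {q a M : ℝ} (hq0 : 0 ≤ q) (hq1 : q ≤ 1) (ha : 0 ≤ a)
    (hM : 1 ≤ M) (hNM : N * q ≤ M) :
    binomLE N q a ≤ (a + 1) * M ^ a * exp (q * a - N * q) := by
  rw [binomLE, ← Finset.sum_filter, mul_assoc]
  refine (Finset.sum_le_card_nsmul _ _ (M ^ a * exp (q * a - N * q)) fun k hk => ?_).trans ?_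
  · obtain ⟨hkN, hka⟩ := Finset.mem_filter.1 hk
    exact choose_mul_pow_mul_one_sub_pow_le hq0 hq1 (Nat.lt_succ_iff.1 (Finset.mem_range.1 hkN))
      hka hM hNM
  · rw [nsmul_eq_mul]
    exact mul_le_mul_of_nonneg_right (card_filter_natCast_le N ha) (by positivity)

lemma binomLE_le_exp (N : ℕ) {q a M : ℝ} (hq0 : 0 ≤ q) (hq1 : q ≤ 1) (ha : 0 ≤ a)
    (hM : 1 ≤ M) (hNM : N * q ≤ M) :
    binomLE N q a ≤ exp (a * (2 + log M) - N * q) := by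
  have hqa : q * a ≤ a := mul_le_of_le_one_left ha hq1
  calc binomLE N q a ≤ (a + 1) * M ^ a * exp (q * a - N * q) :=
        binomLE_le_mul_exp N hq0 hq1 ha hM hNM
    _ ≤ exp a * exp (log M * a) * exp (a - N * q) := by
        rw [← rpow_def_of_pos (by linarith)]
        gcongr
        exact add_one_le_exp a
    _ = exp (a * (2 + log M) - N * q) := by rw [← exp_add, ← exp_add]; ring_nf

-- `r_n` and `p_n`, with `x = n`, `k = K n`, `L = log n`, `ℓ = log log n` as free real parameters.
noncomputable def phaseFourTrials (x k L ℓ : ℝ) : ℕ :=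
  ⌊(⌊50 * (1 + L / (2 * k)) * x / ℓ⌋₊ : ℝ) + x * L / (2 * k)⌋₊

noncomputable def phaseFourProb (x k ℓ : ℝ) : ℝ := (1 - 30 / ℓ) * (2 * k) / x

section PhaseFour

variable {x k L ℓ : ℝ}

lemma phaseFourProb_nonneg (hx : 0 < x) (hk : 0 ≤ k) (hℓ : 30 ≤ ℓ) :
    0 ≤ phaseFourProb x k ℓ := by
  have : 30 / ℓ ≤ 1 := (div_le_one (by linarith)).2 hℓ
  unfold phaseFourProb
  exact div_nonneg (mul_nonneg (by linarith) (by linarith)) hx.le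

lemma phaseFourProb_le_one (hk : 0 < k) (hkx : 2 * k ≤ x) (hℓ : 0 ≤ ℓ) :
    phaseFourProb x k ℓ ≤ 1 := by
  have : 0 ≤ 30 / ℓ := by positivity
  rw [phaseFourProb, div_le_one (by linarith)]
  nlinarith

lemma add_mul_phaseFourProb_eq (hx : 0 < x) (hk : 0 < k) :
    (50 * (1 + L / (2 * k)) * x / ℓ + x * L / (2 * k)) * phaseFourProb x k ℓ =
      (1 - 30 / ℓ) * ((100 * k + 50 * L) / ℓ + L) := by
  unfold phaseFourProb
  field_simp
  ring

lemma le_phaseFourTrials_mul_phaseFourProb (hx : 0 < x) (hk : 0 < k) (hL : 0 ≤ L)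
    (hℓ : 150 ≤ ℓ) :
    L + 10 * L / ℓ - 2 * phaseFourProb x k ℓ ≤ phaseFourTrials x k L ℓ * phaseFourProb x k ℓ := by
  have hmean := add_mul_phaseFourProb_eq (L := L) (ℓ := ℓ) hx hk
  set T := 50 * (1 + L / (2 * k)) * x / ℓ
  have hq := phaseFourProb_nonneg hx hk.le (by linarith : (30 : ℝ) ≤ ℓ)
  have hr : T + x * L / (2 * k) - 2 ≤ phaseFourTrials x k L ℓ := by
    have := Nat.sub_one_lt_floor T
    have := Nat.sub_one_lt_floor ((⌊T⌋₊ : ℝ) + x * L / (2 * k))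
    unfold phaseFourTrials
    linarith
  have hslack : L + 10 * L / ℓ ≤ (1 - 30 / ℓ) * ((100 * k + 50 * L) / ℓ + L) := by
    have hs : 0 ≤ 1 - 30 / ℓ := by rw [sub_nonneg, div_le_one (by linarith)]; linarith
    have hdiff : (1 - 30 / ℓ) * ((100 * k + 50 * L) / ℓ + L) - (L + 10 * L / ℓ) =
        ((1 - 30 / ℓ) * (100 * k) * ℓ + 10 * L * (ℓ - 150)) / ℓ ^ 2 := by
      field_simp
      ring
    rw [← sub_nonneg, hdiff]
    exact div_nonneg (add_nonneg (by positivity) (mul_nonneg (by positivity) (by linarith)))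
      (sq_nonneg ℓ)
  calc L + 10 * L / ℓ - 2 * phaseFourProb x k ℓ
      ≤ (1 - 30 / ℓ) * ((100 * k + 50 * L) / ℓ + L) - 2 * phaseFourProb x k ℓ := by linarith
    _ = (T + x * L / (2 * k) - 2) * phaseFourProb x k ℓ := by
        linear_combination -hmean
    _ ≤ phaseFourTrials x k L ℓ * phaseFourProb x k ℓ := mul_le_mul_of_nonneg_right hr hq

lemma phaseFourTrials_mul_phaseFourProb_le (hx : 0 < x) (hk : 0 < k) (hL : 0 ≤ L)
    (hℓ : 100 ≤ ℓ) :
    phaseFourTrials x k L ℓ * phaseFourProb x k ℓ ≤ k + 3 / 2 * L := by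
  set T := 50 * (1 + L / (2 * k)) * x / ℓ
  have hq := phaseFourProb_nonneg hx hk.le (by linarith : (30 : ℝ) ≤ ℓ)
  have hr : (phaseFourTrials x k L ℓ : ℝ) ≤ T + x * L / (2 * k) := by
    have hT : 0 ≤ T := by positivity
    have := Nat.floor_le hT
    have := Nat.floor_le (by positivity : 0 ≤ (⌊T⌋₊ : ℝ) + x * L / (2 * k))
    unfold phaseFourTrials
    linarith
  calc phaseFourTrials x k L ℓ * phaseFourProb x k ℓ
      ≤ (T + x * L / (2 * k)) * phaseFourProb x k ℓ := mul_le_mul_of_nonneg_right hr hq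
    _ = (1 - 30 / ℓ) * ((100 * k + 50 * L) / ℓ + L) := add_mul_phaseFourProb_eq hx hk
    _ ≤ (100 * k + 50 * L) / ℓ + L :=
        mul_le_of_le_one_left (by positivity)
          (sub_le_self _ (div_nonneg (by norm_num) (by linarith)))
    _ ≤ k + 3 / 2 * L := by
        have : (100 * k + 50 * L) / ℓ ≤ k + L / 2 := by
          rw [div_le_iff₀ (by linarith)]; nlinarith
        linarith

end PhaseFour

lemma natCast_mul_binomLE_le (n Kn : ℕ) {C a : ℝ} (hK1 : 1 ≤ Kn) (hKC : (Kn : ℝ) ≤ C * log n)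
    (hKn : 2 * (Kn : ℝ) ≤ n) (hℓ : 150 ≤ log (log n)) (ha : 0 ≤ a) :
    n * binomLE (phaseFourTrials n Kn (log n) (log (log n))) (phaseFourProb n Kn (log (log n))) a ≤
      exp (a * (2 + log (C + 2) + log (log n)) - 10 * log n / log (log n) + 2) := by
  set L := log (n : ℝ)
  set ℓ := log L
  set N := phaseFourTrials n Kn L ℓ
  set q := phaseFourProb n Kn ℓ
  have hk : (0 : ℝ) < Kn := by exact_mod_cast hK1
  have hx : (0 : ℝ) < n := by linarith
  have hL1 : 1 < L := (log_pos_iff (log_natCast_nonneg n)).1 (by linarith)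
  have hq0 : 0 ≤ q := phaseFourProb_nonneg hx hk.le (by linarith)
  have hq1 : q ≤ 1 := phaseFourProb_le_one hk hKn (by linarith)
  have hC : 0 ≤ C := by nlinarith
  have hNM : N * q ≤ (C + 2) * L := by
    nlinarith [phaseFourTrials_mul_phaseFourProb_le hx hk (by linarith : 0 ≤ L)
      (by linarith : 100 ≤ ℓ)]
  have hM1 : 1 ≤ (C + 2) * L := by nlinarith
  have hlogM : log ((C + 2) * L) = log (C + 2) + ℓ := log_mul (by linarith) (by linarith)
  have hmean := le_phaseFourTrials_mul_phaseFourProb hx hk (by linarith : 0 ≤ L) hℓ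
  have hn : (n : ℝ) = exp L := (exp_log hx).symm
  calc (n : ℝ) * binomLE N q a ≤ exp L * exp (a * (2 + log ((C + 2) * L)) - N * q) := by
        rw [hn]; gcongr; exact binomLE_le_exp N hq0 hq1 ha hM1 hNM
    _ = exp (L + a * (2 + log ((C + 2) * L)) - N * q) := by rw [← exp_add]; ring_nf
    _ ≤ _ := by rw [hlogM, exp_le_exp]; linarith

lemma tendsto_rpow_mul_add_log_sub_div_log_atBot (c : ℝ) :
    Tendsto (fun L : ℝ => L ^ (0.8 : ℝ) * (c + log L) - 10 * L / log L) atTop atBot := by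
  refine tendsto_atBot_mono' _ ?_
    ((tendsto_rpow_atTop (by norm_num : (0 : ℝ) < 0.9)).const_mul_atTop_of_neg
      (by norm_num : (-8 : ℝ) < 0))
  filter_upwards [(isLittleO_log_rpow_atTop (by norm_num : (0 : ℝ) < 0.1)).bound one_pos,
    (tendsto_rpow_atTop (by norm_num : (0 : ℝ) < 0.1)).eventually_ge_atTop c,
    eventually_gt_atTop 1] with L hlogL hcL hL1
  have hL0 : 0 < L := by linarith
  have hlog0 : 0 < log L := log_pos hL1
  rw [norm_of_nonneg hlog0.le, norm_of_nonneg (by positivity), one_mul] at hlogL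
  have hsplit : L ^ (0.9 : ℝ) = L ^ (0.8 : ℝ) * L ^ (0.1 : ℝ) := by
    rw [← rpow_add hL0]; norm_num
  have hL : L = L ^ (0.9 : ℝ) * L ^ (0.1 : ℝ) := by
    rw [← rpow_add hL0]; norm_num
  have hdiv : 10 * L ^ (0.9 : ℝ) ≤ 10 * L / log L := by
    have : 0 ≤ L ^ (0.9 : ℝ) := by positivity
    rw [le_div_iff₀ hlog0]
    calc 10 * L ^ (0.9 : ℝ) * log L ≤ 10 * (L ^ (0.9 : ℝ) * L ^ (0.1 : ℝ)) := by nlinarith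
      _ = 10 * L := by rw [← hL]
  have hmul : L ^ (0.8 : ℝ) * (c + log L) ≤ 2 * L ^ (0.9 : ℝ) := by
    rw [hsplit]
    have : 0 ≤ L ^ (0.8 : ℝ) := by positivity
    nlinarith
  linarith

/-- Let `1 ≤ K n = O(log n)`,
`t_ε = ⌊50·(1 + log n/(2 K n))·n/log log n⌋`,
`p_n = (1 − 30/log log n)·2 K n/n` and `r_n = ⌊t_ε + n·log n/(2 K n)⌋`.  Then
`n·Pr(Bin(r_n, p_n) ≤ (log n)^{0.8}) → 0` as `n → ∞`. -/
theorem phase_four_succeeds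
    (K : ℕ → ℕ) (hK1 : ∀ n, 1 ≤ K n)
    (hKO : ∃ C : ℝ, ∀ᶠ n : ℕ in atTop, (K n : ℝ) ≤ C * Real.log n) :
    Tendsto
      (fun n : ℕ =>
        let tε : ℕ :=
          ⌊50 * (1 + Real.log n / (2 * K n)) * n / Real.log (Real.log n)⌋₊
        let p : ℝ := (1 - 30 / Real.log (Real.log n)) * (2 * K n) / n
        let r : ℕ := ⌊(tε : ℝ) + n * Real.log n / (2 * K n)⌋₊
        (n : ℝ) * binomLE r p ((Real.log n) ^ (0.8 : ℝ)))
      atTop (nhds 0) := by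
  obtain ⟨C, hC⟩ := hKO
  have hlog : Tendsto (fun n : ℕ => log n) atTop atTop :=
    tendsto_log_atTop.comp tendsto_natCast_atTop_atTop
  have hKn : ∀ᶠ n : ℕ in atTop, 2 * (K n : ℝ) ≤ n := by
    filter_upwards [hC, tendsto_natCast_atTop_atTop.eventually
      ((isLittleO_log_id_atTop.const_mul_left (2 * C)).bound one_pos)] with n hKC hlogn
    rw [one_mul, id, norm_of_nonneg (Nat.cast_nonneg n)] at hlogn
    linarith [le_norm_self (2 * C * log n)]
  have hℓ : ∀ᶠ n : ℕ in atTop, 150 ≤ log (log n) :=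
    (tendsto_log_atTop.comp hlog).eventually_ge_atTop 150
  have hbound := tendsto_exp_atBot.comp
    (tendsto_atBot_add_const_right _ 2 (tendsto_rpow_mul_add_log_sub_div_log_atBot
      (2 + log (C + 2)))) |>.comp hlog
  refine squeeze_zero' ?_ ?_ hbound
  · filter_upwards [hKn, hℓ] with n hKn hℓ
    have hk : (0 : ℝ) < K n := by exact_mod_cast hK1 n
    exact mul_nonneg (Nat.cast_nonneg n) (binomLE_nonneg _ _
      (phaseFourProb_nonneg (by linarith) hk.le (by linarith))
      (phaseFourProb_le_one hk hKn (by linarith)))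
  · filter_upwards [hC, hKn, hℓ] with n hKC hKn hℓ
    exact natCast_mul_binomLE_le n (K n) (hK1 n) hKC hKn hℓ (by positivity)
end

section
/- Let r, m ∈ ℕ with m < r and let p ∈ (0,1). If 2m(1 − p) ≤ (r − m)·p, then Pr(Bin(r,p) ≤ m) ≤ 2·C(r,m)·p^m·(1 − p)^{r − m}. -/
/-- Let `r, m ∈ ℕ` with `m < r` and `p ∈ (0,1)`.  If
`2m(1 − p) ≤ (r − m)·p`, then `Pr(Bin(r,p) ≤ m) ≤ 2·C(r,m)·p^m·(1 − p)^(r − m)`,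
where `Bin(r,p)` is a binomial random variable with `r` trials and success
probability `p`; the left-hand probability is written out as the corresponding
sum of binomial point masses. -/
theorem binomial_lower_tail_le (r m : ℕ) (hm : m < r) (p : ℝ) (hp0 : 0 < p) (hp1 : p < 1)
    (h : 2 * (m : ℝ) * (1 - p) ≤ ((r : ℝ) - m) * p) :
    (∑ k ∈ Finset.range (m + 1), (r.choose k : ℝ) * p ^ k * (1 - p) ^ (r - k)) ≤
      2 * (r.choose m : ℝ) * p ^ m * (1 - p) ^ (r - m) := by
  have hq0 : (0:ℝ) < 1 - p := by linarith
  set f : ℕ → ℝ := fun k => (r.choose k : ℝ) * p ^ k * (1-p) ^ (r - k) with hf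
  have step : ∀ k, k < m → 2 * f k ≤ f (k+1) := by
    intro k hk
    have hkr : k < r := hk.trans hm
    have hck : (0:ℝ) < (r.choose k : ℝ) := by
      exact_mod_cast Nat.choose_pos hkr.le
    have hchoose : ((r.choose (k+1)) : ℝ) * ((k:ℝ)+1) = (r.choose k : ℝ) * ((r:ℝ) - k) := by
      have hle := Nat.choose_succ_right_eq r k
      have hcast := congrArg (fun n : ℕ => (n:ℝ)) hle
      push_cast [Nat.cast_sub hkr.le] at hcast
      linarith [hcast]
    have hkm : (k:ℝ) + 1 ≤ (m:ℝ) := by exact_mod_cast hk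
    have h1 : 2 * (1-p) * ((k:ℝ)+1) ≤ ((r:ℝ)-k) * p := by nlinarith
    have h2 : 2 * (r.choose k : ℝ) * (1-p) * ((k:ℝ)+1) ≤
        (r.choose (k+1) : ℝ) * p * ((k:ℝ)+1) := by nlinarith
    have key : 2 * (r.choose k : ℝ) * (1-p) ≤ (r.choose (k+1) : ℝ) * p :=
      le_of_mul_le_mul_right h2 (by positivity)
    have hr : r - k = (r - (k+1)) + 1 := by omega
    have hpos : (0:ℝ) ≤ p ^ k * (1-p) ^ (r - (k+1)) := by positivity
    have := mul_le_mul_of_nonneg_right key hpos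
    simp only [hf]
    rw [hr, pow_succ, pow_succ]
    nlinarith [this]
  have decay : ∀ j, j ≤ m → f (m - j) ≤ (1/2)^j * f m := by
    intro j
    induction j with
    | zero => simp
    | succ j ih =>
      intro hj
      have hj' : j ≤ m := by omega
      have h1 := step (m - (j+1)) (by omega)
      have he : m - (j+1) + 1 = m - j := by omega
      rw [he] at h1
      have h2 := ih hj'
      have : f (m - (j+1)) ≤ (1/2) * f (m - j) := by linarith
      calc f (m - (j+1)) ≤ (1/2) * f (m - j) := this
        _ ≤ (1/2) * ((1/2)^j * f m) := by linarith
        _ = (1/2)^(j+1) * f m := by ring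
  have bound : ∀ k ∈ Finset.range (m+1), f k ≤ (1/2)^(m-k) * f m := by
    intro k hk
    have hk' : k ≤ m := by simpa [Nat.lt_succ_iff] using hk
    have := decay (m - k) (by omega)
    have he : m - (m - k) = k := by omega
    rwa [he] at this
  have hfm : (0:ℝ) ≤ f m := by positivity
  have hsum : (∑ k ∈ Finset.range (m+1), f k) ≤
      (∑ k ∈ Finset.range (m+1), (1/2:ℝ)^(m-k)) * f m := by
    rw [Finset.sum_mul]
    exact Finset.sum_le_sum bound
  have hgeom : (∑ k ∈ Finset.range (m+1), (1/2:ℝ)^(m-k)) ≤ 2 := by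
    have hrefl : (∑ k ∈ Finset.range (m+1), (1/2:ℝ)^(m-k)) =
        ∑ j ∈ Finset.range (m+1), (1/2:ℝ)^j := by
      rw [← Finset.sum_range_reflect]
      apply Finset.sum_congr rfl
      intro j hj
      have hj' : j < m+1 := Finset.mem_range.mp hj
      congr 1
      omega
    rw [hrefl, geom_sum_eq (by norm_num : (1/2:ℝ) ≠ 1)]
    have : (0:ℝ) < (1/2:ℝ)^(m+1) := by positivity
    rw [div_le_iff_of_neg (by norm_num : (1/2:ℝ) - 1 < 0)]
    linarith
  calc (∑ k ∈ Finset.range (m+1), f k)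
      ≤ (∑ k ∈ Finset.range (m+1), (1/2:ℝ)^(m-k)) * f m := hsum
    _ ≤ 2 * f m := by nlinarith
    _ = 2 * (r.choose m : ℝ) * p ^ m * (1 - p) ^ (r - m) := by simp [hf]; ring
end
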